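/- arXiv:2405.06796 — 3 statements merged into one kernel-verified Lean document; each statement's English description precedes it below -/
import Mathlib

section
/- If j = ⌊αn⌋ for a fixed α ∈ (0,1), the inner product ⟨e^j, e^{j+1}⟩ of the neighbouring change-point basis vectors tends to 1 as n → ∞ (asymptotic collinearity of the design matrix). -/
/-!
Up to normalisation, `e^k` is the centred step vector `n · 1_{i ≤ k} - k`, whose Gram matrix is
explicit: for `0 < k ≤ m < n`, `⟨e^k, e^m⟩ = √(k (n - m) / (m (n - k)))`. For `k = j`, `m = j + 1`
this is `√(j / (j + 1) · (n - j - 1) / (n - j))`, and both `j` and `n - j - 1` grow linearly in `n`.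
-/

open Finset Filter

/-- The change-point basis vector `e^k` in `ℝ^n` (0-indexed entries). -/
noncomputable def cpBasis (n k : ℕ) (i : Fin n) : ℝ :=
  if (i : ℕ) + 1 ≤ k then Real.sqrt (((n : ℝ) - k) / (n * k))
  else - Real.sqrt ((k : ℝ) / (n * ((n : ℝ) - k)))

theorem sum_fin_ite_add_one_le {n k : ℕ} (hk : k ≤ n) (c : ℝ) :
    ∑ i : Fin n, (if (i : ℕ) + 1 ≤ k then c else 0) = k * c := by
  simp only [Nat.add_one_le_iff, sum_ite, sum_const_zero, add_zero, sum_const,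
    Fin.card_filter_val_lt, min_eq_right hk, nsmul_eq_mul]

theorem cpBasis_eq {n k : ℕ} (hk : 0 < k) (hkn : k < n) (i : Fin n) :
    cpBasis n k i = ((if (i : ℕ) + 1 ≤ k then (n : ℝ) else 0) - k) / √(n * k * (n - k)) := by
  have hk' : (0 : ℝ) < k := by exact_mod_cast hk
  have hnk : (0 : ℝ) < n - k := sub_pos.2 (by exact_mod_cast hkn)
  have hn : (0 : ℝ) < n := hk'.trans (by exact_mod_cast hkn)
  rw [eq_div_iff (by positivity), cpBasis]
  split_ifs
  · rw [← Real.sqrt_mul (by positivity), show (n - k) / (n * k) * (n * k * (n - k)) = ((n : ℝ) - k) ^ 2 by field_simp]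
    exact Real.sqrt_sq hnk.le
  · rw [neg_mul, ← Real.sqrt_mul (by positivity), zero_sub, neg_inj, show k / (n * (n - k)) * (n * k * (n - k)) = (k : ℝ) ^ 2 by field_simp]
    exact Real.sqrt_sq hk'.le

theorem sum_step_mul_step {n k m : ℕ} (hkm : k ≤ m) (hmn : m ≤ n) :
    ∑ i : Fin n, ((if (i : ℕ) + 1 ≤ k then (n : ℝ) else 0) - k) *
      ((if (i : ℕ) + 1 ≤ m then (n : ℝ) else 0) - m) = n * k * (n - m) := by
  have hprod : ∀ i : Fin n, (if (i : ℕ) + 1 ≤ k then (n : ℝ) else 0) *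
      (if (i : ℕ) + 1 ≤ m then (n : ℝ) else 0) = if (i : ℕ) + 1 ≤ k then (n : ℝ) * n else 0 := by
    intro i; split_ifs <;> first | omega | ring
  simp only [sub_mul, mul_sub, hprod, sum_sub_distrib, ← sum_mul, ← mul_sum,
    sum_fin_ite_add_one_le (hkm.trans hmn), sum_fin_ite_add_one_le hmn, sum_const, card_univ,
    Fintype.card_fin, nsmul_eq_mul]
  ring

theorem cpBasis_inner {n k m : ℕ} (hk : 0 < k) (hkm : k ≤ m) (hmn : m < n) :
    ∑ i : Fin n, cpBasis n k i * cpBasis n m i = √(k * (n - m) / (m * (n - k))) := by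
  have hk' : (0 : ℝ) < k := by exact_mod_cast hk
  have hm' : (0 : ℝ) < m := by exact_mod_cast hk.trans_le hkm
  have hnm : (0 : ℝ) < n - m := sub_pos.2 (by exact_mod_cast hmn)
  have hnk : (0 : ℝ) < n - k := sub_pos.2 (by exact_mod_cast hkm.trans_lt hmn)
  have hn : (0 : ℝ) < n := by linarith
  simp only [cpBasis_eq hk (hkm.trans_lt hmn), cpBasis_eq (hk.trans_le hkm) hmn, div_mul_div_comm,
    ← sum_div, sum_step_mul_step hkm hmn.le]
  rw [← Real.sqrt_mul (by positivity), ← Real.sqrt_sq (by positivity : (0 : ℝ) ≤ n * k * (n - m)),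
    ← Real.sqrt_div' _ (by positivity)]
  congr 1
  field_simp

theorem tendsto_div_add_one_nhds_one {ι : Type*} {l : Filter ι} {f : ι → ℝ}
    (hf : Tendsto f l atTop) : Tendsto (fun x => f x / (f x + 1)) l (nhds 1) := by
  have h : Tendsto (fun x => 1 - (f x + 1)⁻¹) l (nhds (1 - 0)) :=
    tendsto_const_nhds.sub (tendsto_inv_atTop_zero.comp (tendsto_atTop_add_const_right _ 1 hf))
  rw [sub_zero] at h
  refine h.congr' ?_
  filter_upwards [hf.eventually_gt_atTop 0] with x hx
  field_simp
  ring

/-- asymptotic collinearity. With `j = j(n) = ⌊α n⌋` for fixed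
`α ∈ (0,1)`, the inner product `⟨e^j, e^{j+1}⟩` tends to `1` as `n → ∞`. -/
theorem changepoint_basis_asymptotic_collinearity
    (α : ℝ) (hα0 : 0 < α) (hα1 : α < 1) :
    Tendsto (fun n : ℕ =>
        ∑ i : Fin n, cpBasis n ⌊α * n⌋₊ i * cpBasis n (⌊α * n⌋₊ + 1) i)
      atTop (nhds 1) := by
  set j : ℕ → ℕ := fun n => ⌊α * n⌋₊
  have hj_top : Tendsto (fun n : ℕ => (j n : ℝ)) atTop atTop :=
    tendsto_natCast_atTop_atTop.comp <| tendsto_nat_floor_atTop.comp <|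
      tendsto_natCast_atTop_atTop.const_mul_atTop hα0
  have hrest_top : Tendsto (fun n : ℕ => (n : ℝ) - j n - 1) atTop atTop := by
    refine tendsto_atTop_mono (fun n => ?_) (tendsto_atTop_add_const_right _ (-1) <|
      tendsto_natCast_atTop_atTop.const_mul_atTop (sub_pos.2 hα1))
    have := Nat.floor_le (by positivity : (0 : ℝ) ≤ α * n)
    nlinarith
  have hlim := ((tendsto_div_add_one_nhds_one hj_top).mul
    (tendsto_div_add_one_nhds_one hrest_top)).sqrt
  rw [mul_one, Real.sqrt_one] at hlim
  refine hlim.congr' ?_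
  filter_upwards [hj_top.eventually_ge_atTop 1, hrest_top.eventually_gt_atTop 0] with n hj1 hrest
  have hjn : j n + 1 < n := by
    have : (j n : ℝ) + 1 < n := by linarith
    exact_mod_cast this
  rw [cpBasis_inner (by exact_mod_cast hj1) (Nat.le_succ _) hjn, sub_add_cancel, ← mul_div_mul_comm, Nat.cast_add_one, sub_add_eq_sub_sub]
end

section
/- Suppose ε_1,...,ε_n are i.i.d. with mean 0 and E(ε_i^{2m}) < ∞ for some positive integer m. Then max over 0 ≤ i < j ≤ n of (ε_{i+1}+...+ε_j)²/(j−i) is O_p(n^{2/m}): for all δ > 0 there exists M such that for all n, P( max_{0≤i<j≤n} (ε_{i+1}+...+ε_j)²/(j−i) > M n^{2/m} ) < δ. -/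
/-!
The key estimate is the Rosenthal-type moment bound `E (S_{i,j}^{2m}) ≤ C (j - i)^m`, proved by
induction on the order `2b` of the moment. Adding one more summand `ε` to a sum `S` independent
of it, expand `(S + ε)^{2b+2}` binomially: independence factorises each term, the term linear
in `ε` has mean zero, the top term is `E S^{2b+2}`, and all other terms involve moments of `S` of
order at most `2b`, hence are `O(|s|^b)`. Summing these increments over the summands gives
`O(|s|^{b+1})`.

Markov's inequality for `S_{i,j}^{2m}` at the level `(M n^{2/m} (j - i))^m` then bounds each
event `S_{i,j}^2 / (j - i) > M n^{2/m}` by `C / (M^m n^2)`, and a union bound over the at most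
`n (n + 1)` pairs `(i, j)` gives `2 C / M^m`, which is small for large `M`.
-/

open MeasureTheory ProbabilityTheory Finset

lemma abs_pow_le_one_add_pow_two_mul (x : ℝ) {j k : ℕ} (hj : j ≤ 2 * k) :
    |x ^ j| ≤ 1 + x ^ (2 * k) := by
  rw [abs_pow, ← (even_two_mul k).pow_abs]
  rcases le_total |x| 1 with hx | hx
  · linarith [pow_le_one₀ (abs_nonneg x) hx (n := j), pow_nonneg (abs_nonneg x) (2 * k)]
  · linarith [pow_le_pow_right₀ hx hj]

lemma one_add_mul_pow_add_le {C k : ℝ} (hC : 0 ≤ C) (hk : 0 ≤ k) (b : ℕ) :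
    (1 + C) * k ^ (b + 1) + (1 + C * k ^ b) ≤ (1 + C) * (k + 1) ^ (b + 1) := by
  have h1 : 1 ≤ (k + 1) ^ b := one_le_pow₀ (by linarith)
  have h2 : k ^ b ≤ (k + 1) ^ b := pow_le_pow_left₀ hk (by linarith) b
  have h3 : k * k ^ b ≤ k * (k + 1) ^ b := mul_le_mul_of_nonneg_left h2 hk
  rw [pow_succ', pow_succ]
  nlinarith

lemma natCast_mul_succ_mul_div_sq_le (n : ℕ) {a : ℝ} (ha : 0 ≤ a) :
    (n * (n + 1) : ℝ) * (a / n ^ 2) ≤ 2 * a := by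
  rcases n.eq_zero_or_pos with rfl | hn
  · simpa using ha
  · have hn : (1 : ℝ) ≤ n := by exact_mod_cast hn
    rw [mul_div_assoc', div_le_iff₀ (by positivity)]
    nlinarith [mul_le_mul_of_nonneg_left hn ha]

lemma rpow_two_div_natCast_pow {x : ℝ} (hx : 0 ≤ x) {m : ℕ} (hm : m ≠ 0) :
    (x ^ ((2 : ℝ) / m)) ^ m = x ^ 2 := by
  rw [← Real.rpow_mul_natCast hx, div_mul_cancel₀ _ (by exact_mod_cast hm), Real.rpow_two]

section

variable {Ω : Type*} [MeasurableSpace Ω] {μ : Measure Ω}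

lemma integrable_pow_of_le [IsFiniteMeasure μ] {f : Ω → ℝ} {j k : ℕ}
    (hf : AEStronglyMeasurable f μ) (hint : Integrable (fun ω => f ω ^ (2 * k)) μ)
    (hj : j ≤ 2 * k) : Integrable (fun ω => f ω ^ j) μ :=
  ((integrable_const 1).add hint).mono' (hf.pow j) <|
    .of_forall fun ω => abs_pow_le_one_add_pow_two_mul (f ω) hj

lemma abs_integral_pow_le [IsProbabilityMeasure μ] {f : Ω → ℝ} {j k : ℕ}
    (hint : Integrable (fun ω => f ω ^ (2 * k)) μ) (hj : j ≤ 2 * k) :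
    |∫ ω, f ω ^ j ∂μ| ≤ 1 + ∫ ω, f ω ^ (2 * k) ∂μ :=
  calc |∫ ω, f ω ^ j ∂μ| ≤ ∫ ω, |f ω ^ j| ∂μ := abs_integral_le_integral_abs
    _ ≤ ∫ ω, (1 + f ω ^ (2 * k)) ∂μ :=
      integral_mono_of_nonneg (.of_forall fun _ => abs_nonneg _) ((integrable_const 1).add hint)
        (.of_forall fun ω => abs_pow_le_one_add_pow_two_mul (f ω) hj)
    _ = 1 + ∫ ω, f ω ^ (2 * k) ∂μ := by
      rw [integral_add (integrable_const 1) hint, integral_const, probReal_univ, one_smul]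

lemma ProbabilityTheory.IdentDistrib.integrable_pow_and_abs_integral_pow_le [IsProbabilityMeasure μ]
    {f g : Ω → ℝ} {j k : ℕ} (hfg : IdentDistrib f g μ μ)
    (hint : Integrable (fun ω => g ω ^ (2 * k)) μ) (hj : j ≤ 2 * k) :
    Integrable (fun ω => f ω ^ j) μ ∧ |∫ ω, f ω ^ j ∂μ| ≤ 1 + ∫ ω, g ω ^ (2 * k) ∂μ := by
  have hpow := hfg.comp (measurable_id.pow_const j)
  exact ⟨hpow.integrable_iff.2
      (integrable_pow_of_le hfg.aemeasurable_snd.aestronglyMeasurable hint hj),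
    hpow.integral_eq ▸ abs_integral_pow_le hint hj⟩

lemma integral_add_pow_eq_sum_of_indepFun {S Y : Ω → ℝ} {N : ℕ} (hind : IndepFun S Y μ)
    (hS : ∀ r ≤ N, Integrable (fun ω => S ω ^ r) μ)
    (hY : ∀ r ≤ N, Integrable (fun ω => Y ω ^ r) μ) :
    Integrable (fun ω => (S ω + Y ω) ^ N) μ ∧
      ∫ ω, (S ω + Y ω) ^ N ∂μ =
        ∑ r ∈ range (N + 1), (∫ ω, S ω ^ r ∂μ) * (∫ ω, Y ω ^ (N - r) ∂μ) * N.choose r := by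
  have hpow : ∀ r, IndepFun (fun ω => S ω ^ r) (fun ω => Y ω ^ (N - r)) μ := fun r =>
    hind.comp (measurable_id.pow_const r) (measurable_id.pow_const (N - r))
  have hterm : ∀ r ∈ range (N + 1),
      Integrable (fun ω => S ω ^ r * Y ω ^ (N - r) * N.choose r) μ := fun r hr =>
    ((hpow r).integrable_mul (hS r (Nat.lt_succ_iff.1 (mem_range.1 hr)))
      (hY (N - r) (Nat.sub_le N r))).mul_const _
  simp_rw [add_pow]
  refine ⟨integrable_finsetSum _ hterm, ?_⟩
  rw [integral_finsetSum _ hterm]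
  refine sum_congr rfl fun r hr => ?_
  rw [integral_mul_const, (hpow r).integral_fun_mul_eq_mul_integral
    (hS r (Nat.lt_succ_iff.1 (mem_range.1 hr))).1 (hY (N - r) (Nat.sub_le N r)).1]

lemma integral_add_pow_le_of_indepFun [IsProbabilityMeasure μ] {S Y : Ω → ℝ} {b : ℕ} {B : ℝ}
    (hind : IndepFun S Y μ) (hSm : AEStronglyMeasurable S μ)
    (hS : Integrable (fun ω => S ω ^ (2 * b + 2)) μ)
    (hY : ∀ j ≤ 2 * b + 2, Integrable (fun ω => Y ω ^ j) μ ∧ |∫ ω, Y ω ^ j ∂μ| ≤ B)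
    (hYmean : ∫ ω, Y ω ∂μ = 0) :
    Integrable (fun ω => (S ω + Y ω) ^ (2 * b + 2)) μ ∧
      ∫ ω, (S ω + Y ω) ^ (2 * b + 2) ∂μ ≤
        ∫ ω, S ω ^ (2 * b + 2) ∂μ + 2 ^ (2 * b + 2) * B * (1 + ∫ ω, S ω ^ (2 * b) ∂μ) := by
  set N := 2 * b + 2
  have hSr : ∀ r ≤ N, Integrable (fun ω => S ω ^ r) μ := fun r hr =>
    integrable_pow_of_le (k := b + 1) hSm hS (by omega)
  obtain ⟨hint, heq⟩ := integral_add_pow_eq_sum_of_indepFun hind hSr fun r hr => (hY r hr).1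
  refine ⟨hint, ?_⟩
  set g : ℕ → ℝ := fun r => (∫ ω, S ω ^ r ∂μ) * (∫ ω, Y ω ^ (N - r) ∂μ) * N.choose r
  -- `j = 0` gives `1 ≤ B`
  have hB : 0 ≤ B := (abs_nonneg _).trans (hY 0 (Nat.zero_le _)).2
  have hSnonneg : 0 ≤ 1 + ∫ ω, S ω ^ (2 * b) ∂μ := by
    have : 0 ≤ ∫ ω, S ω ^ (2 * b) ∂μ :=
      integral_nonneg fun ω => (even_two_mul b).pow_nonneg (S ω)
    linarith
  have hlow : ∀ r ∈ range (2 * b + 1), g r ≤ N.choose r * (B * (1 + ∫ ω, S ω ^ (2 * b) ∂μ)) := by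
    intro r hr
    have hr : r ≤ 2 * b := Nat.lt_succ_iff.1 (mem_range.1 hr)
    have hSmom := abs_integral_pow_le (hSr _ (by omega)) hr
    have hYmom := (hY (N - r) (Nat.sub_le N r)).2
    calc g r ≤ |g r| := le_abs_self _
      _ = |∫ ω, S ω ^ r ∂μ| * |∫ ω, Y ω ^ (N - r) ∂μ| * N.choose r := by
        simp only [g, abs_mul, Nat.abs_cast]
      _ ≤ (1 + ∫ ω, S ω ^ (2 * b) ∂μ) * B * N.choose r := by gcongr
      _ = _ := by ring
  have hchoose : ∑ r ∈ range (2 * b + 1), (N.choose r : ℝ) ≤ 2 ^ N := by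
    have : ∑ r ∈ range (2 * b + 1), N.choose r ≤ 2 ^ N := by
      rw [← Nat.sum_range_choose]
      exact sum_le_sum_of_subset (range_subset_range.2 (by omega))
    exact_mod_cast this
  calc ∫ ω, (S ω + Y ω) ^ N ∂μ = ∑ r ∈ range (2 * b + 1), g r + g (2 * b + 1) + g N := by
        rw [heq, sum_range_succ, sum_range_succ]
    _ = ∑ r ∈ range (2 * b + 1), g r + ∫ ω, S ω ^ N ∂μ := by
        simp [g, show N - (2 * b + 1) = 1 by omega, hYmean]
    _ ≤ (∑ r ∈ range (2 * b + 1), (N.choose r : ℝ)) * (B * (1 + ∫ ω, S ω ^ (2 * b) ∂μ))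
          + ∫ ω, S ω ^ N ∂μ := by
        rw [sum_mul]; gcongr with r hr; exact hlow r hr
    _ ≤ ∫ ω, S ω ^ N ∂μ + 2 ^ N * B * (1 + ∫ ω, S ω ^ (2 * b) ∂μ) := by
        nlinarith [mul_le_mul_of_nonneg_right hchoose (mul_nonneg hB hSnonneg)]

section SumMoments

variable [IsProbabilityMeasure μ] {X : ℕ → Ω → ℝ}

lemma integral_sum_pow_succ_le {b : ℕ} {B C : ℝ} (hmeas : ∀ i, Measurable (X i))
    (hindep : iIndepFun X μ) (hmean : ∀ i, ∫ ω, X i ω ∂μ = 0)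
    (hX : ∀ i, ∀ j ≤ 2 * b + 2, Integrable (fun ω => X i ω ^ j) μ ∧ |∫ ω, X i ω ^ j ∂μ| ≤ B)
    (hC0 : 0 ≤ C) (hC : ∀ s : Finset ℕ, ∫ ω, (∑ t ∈ s, X t ω) ^ (2 * b) ∂μ ≤ C * #s ^ b)
    (s : Finset ℕ) :
    Integrable (fun ω => (∑ t ∈ s, X t ω) ^ (2 * b + 2)) μ ∧
      ∫ ω, (∑ t ∈ s, X t ω) ^ (2 * b + 2) ∂μ ≤ 2 ^ (2 * b + 2) * B * ((1 + C) * #s ^ (b + 1)) := by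
  have hB : 0 ≤ B := (abs_nonneg _).trans (hX 0 0 (Nat.zero_le _)).2
  classical
  induction s using Finset.induction_on with
  | empty => simp
  | @insert x s hx ih =>
    have hind : IndepFun (fun ω => ∑ t ∈ s, X t ω) (X x) μ := by
      convert hindep.indepFun_finsetSum_of_notMem hmeas hx
      rw [Finset.sum_apply]
    have hSm : AEStronglyMeasurable (fun ω => ∑ t ∈ s, X t ω) μ :=
      (Finset.measurable_sum s fun i _ => hmeas i).aestronglyMeasurable
    obtain ⟨hint, hle⟩ := integral_add_pow_le_of_indepFun hind hSm ih.1 (hX x) (hmean x)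
    simp_rw [sum_insert hx, add_comm (X x _)]
    refine ⟨hint, hle.trans ?_⟩
    rw [card_insert_of_notMem hx, Nat.cast_succ]
    have hstep := one_add_mul_pow_add_le hC0 (Nat.cast_nonneg #s) b
    have hK : (0 : ℝ) ≤ 2 ^ (2 * b + 2) * B := by positivity
    nlinarith [ih.2, hC s, mul_le_mul_of_nonneg_left hstep hK]

theorem exists_integral_sum_pow_le {m : ℕ} {B : ℝ} (hmeas : ∀ i, Measurable (X i))
    (hindep : iIndepFun X μ) (hmean : ∀ i, ∫ ω, X i ω ∂μ = 0)
    (hX : ∀ i, ∀ j ≤ 2 * m, Integrable (fun ω => X i ω ^ j) μ ∧ |∫ ω, X i ω ^ j ∂μ| ≤ B) :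
    ∃ C, 0 ≤ C ∧ ∀ s : Finset ℕ, Integrable (fun ω => (∑ t ∈ s, X t ω) ^ (2 * m)) μ ∧
      ∫ ω, (∑ t ∈ s, X t ω) ^ (2 * m) ∂μ ≤ C * #s ^ m := by
  suffices ∀ b ≤ m, ∃ C, 0 ≤ C ∧ ∀ s : Finset ℕ,
      Integrable (fun ω => (∑ t ∈ s, X t ω) ^ (2 * b)) μ ∧
        ∫ ω, (∑ t ∈ s, X t ω) ^ (2 * b) ∂μ ≤ C * #s ^ b from this m le_rfl
  intro b
  induction b with
  | zero => exact fun _ => ⟨1, zero_le_one, fun s => by simp⟩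
  | succ b ih =>
    intro hb
    obtain ⟨C, hC0, hC⟩ := ih (by omega)
    have hB : 0 ≤ B := (abs_nonneg _).trans (hX 0 0 (Nat.zero_le _)).2
    refine ⟨2 ^ (2 * b + 2) * B * (1 + C), by positivity, fun s => ?_⟩
    rw [mul_assoc _ (1 + C)]
    exact integral_sum_pow_succ_le hmeas hindep hmean (fun i j hj => hX i j (by omega)) hC0
      (fun s => (hC s).2) s

end SumMoments

lemma measure_lt_sq_div_le [IsFiniteMeasure μ] {f : Ω → ℝ} {m : ℕ} {c k C : ℝ} (hc : 0 < c)
    (hk : 0 < k) (hint : Integrable (fun ω => f ω ^ (2 * m)) μ)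
    (hbound : ∫ ω, f ω ^ (2 * m) ∂μ ≤ C * k ^ m) :
    μ {ω | c < f ω ^ 2 / k} ≤ ENNReal.ofReal (C / c ^ m) := by
  have hsub : {ω | c < f ω ^ 2 / k} ⊆ {ω | (c * k) ^ m ≤ f ω ^ (2 * m)} := fun ω hω => by
    rw [Set.mem_ofPred_eq, lt_div_iff₀ hk] at hω
    rw [Set.mem_ofPred_eq, pow_mul]
    exact pow_le_pow_left₀ (by positivity) hω.le m
  have hmarkov := mul_meas_ge_le_integral_of_nonneg
    (.of_forall fun ω => (even_two_mul m).pow_nonneg (f ω)) hint ((c * k) ^ m)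
  have hreal : μ.real {ω | (c * k) ^ m ≤ f ω ^ (2 * m)} ≤ C / c ^ m := by
    rw [le_div_iff₀ (by positivity)]
    refine le_of_mul_le_mul_left ?_ (by positivity : 0 < k ^ m)
    calc k ^ m * (μ.real {ω | (c * k) ^ m ≤ f ω ^ (2 * m)} * c ^ m)
        = (c * k) ^ m * μ.real {ω | (c * k) ^ m ≤ f ω ^ (2 * m)} := by ring
      _ ≤ C * k ^ m := hmarkov.trans hbound
      _ = k ^ m * C := mul_comm _ _
  calc μ {ω | c < f ω ^ 2 / k} ≤ μ {ω | (c * k) ^ m ≤ f ω ^ (2 * m)} := measure_mono hsub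
    _ = ENNReal.ofReal (μ.real {ω | (c * k) ^ m ≤ f ω ^ (2 * m)}) := (ofReal_measureReal).symm
    _ ≤ ENNReal.ofReal (C / c ^ m) := ENNReal.ofReal_le_ofReal hreal

lemma measure_exists_lt_le_le (A : ℕ → ℕ → Set Ω) {r : ENNReal} (n : ℕ)
    (hA : ∀ i j, i < j → j ≤ n → μ (A i j) ≤ r) :
    μ {ω | ∃ i j, i < j ∧ j ≤ n ∧ ω ∈ A i j} ≤ (n * (n + 1) : ℕ) * r := by
  set B : ℕ × ℕ → Set Ω := fun p => {ω | p.1 < p.2 ∧ p.2 ≤ n ∧ ω ∈ A p.1 p.2}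
  have hsub : {ω | ∃ i j, i < j ∧ j ≤ n ∧ ω ∈ A i j} ⊆ ⋃ p ∈ range n ×ˢ range (n + 1), B p := by
    rintro ω ⟨i, j, hij, hjn, hω⟩
    exact Set.mem_biUnion (x := (i, j)) (by simp; omega) ⟨hij, hjn, hω⟩
  have hB : ∀ p ∈ range n ×ˢ range (n + 1), μ (B p) ≤ r := by
    rintro ⟨i, j⟩ -
    by_cases h : i < j ∧ j ≤ n
    · exact (measure_mono fun ω hω => hω.2.2).trans (hA i j h.1 h.2)
    · exact (measure_mono (t := ∅) fun ω hω => h ⟨hω.1, hω.2.1⟩).trans (by simp)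
  calc μ {ω | ∃ i j, i < j ∧ j ≤ n ∧ ω ∈ A i j} ≤ ∑ p ∈ range n ×ˢ range (n + 1), μ (B p) :=
        (measure_mono hsub).trans (measure_biUnion_finset_le _ _)
    _ ≤ (n * (n + 1) : ℕ) * r := by
        simpa [nsmul_eq_mul] using sum_le_card_nsmul _ _ _ hB

end

/-- Lemma: crude maximal bound under `2m` moments: if
`ε_1, ε_2, …` are i.i.d. with mean `0` and `E(ε^{2m}) < ∞`, then
`max_{0 ≤ i < j ≤ n} (ε_{i+1} + ⋯ + ε_j)²/(j−i) = O_p(n^{2/m})`. -/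
theorem max_normalised_partial_sums_Op
    {Ω : Type*} [MeasurableSpace Ω] (μ : Measure Ω) [IsProbabilityMeasure μ]
    (ε : ℕ → Ω → ℝ) (m : ℕ) (hm : 1 ≤ m)
    (hmeas : ∀ i, Measurable (ε i))
    (hindep : iIndepFun ε μ)
    (hident : ∀ i, IdentDistrib (ε i) (ε 1) μ μ)
    (hmom : Integrable (fun ω => (ε 1 ω) ^ (2 * m)) μ)
    (hmean : μ[ε 1] = 0) :
    ∀ δ : ℝ, 0 < δ → ∃ M : ℝ, ∀ n : ℕ,
      μ {ω | ∃ i j : ℕ, i < j ∧ j ≤ n ∧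
          (∑ t ∈ Finset.Ioc i j, ε t ω) ^ 2 / ((j : ℝ) - i)
            > M * (n : ℝ) ^ ((2 : ℝ) / m)}
        < ENNReal.ofReal δ := by
  intro δ hδ
  obtain ⟨C, hC0, hC⟩ := exists_integral_sum_pow_le hmeas hindep
    (fun i => (hident i).integral_eq.trans hmean)
    (fun i j hj => (hident i).integrable_pow_and_abs_integral_pow_le hmom hj)
  set M := 2 * C / δ + 1
  have hM : 1 ≤ M := by simp only [M]; linarith [div_nonneg (mul_nonneg zero_le_two hC0) hδ.le]
  refine ⟨M, fun n => ?_⟩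
  have hpair : ∀ i j, i < j → j ≤ n →
      μ {ω | M * (n : ℝ) ^ ((2 : ℝ) / m) < (∑ t ∈ Ioc i j, ε t ω) ^ 2 / ((j : ℝ) - i)} ≤
        ENNReal.ofReal (C / M ^ m / n ^ 2) := by
    intro i j hij hjn
    obtain ⟨hint, hbound⟩ := hC (Ioc i j)
    rw [Nat.card_Ioc, Nat.cast_sub hij.le] at hbound
    have hn : (0 : ℝ) < n := by exact_mod_cast (Nat.zero_le i).trans_lt (hij.trans_le hjn)
    convert measure_lt_sq_div_le (c := M * (n : ℝ) ^ ((2 : ℝ) / m)) (by positivity)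
      (sub_pos.2 (by exact_mod_cast hij)) hint hbound using 2
    rw [mul_pow, rpow_two_div_natCast_pow hn.le (by omega), div_div]
  have hMδ : 2 * (C / M ^ m) < δ := by
    rw [mul_div_assoc', div_lt_iff₀ (by positivity)]
    nlinarith [le_self_pow₀ hM (by omega : m ≠ 0), div_mul_cancel₀ (2 * C) hδ.ne']
  calc _ ≤ ((n * (n + 1) : ℕ) : ENNReal) * ENNReal.ofReal (C / M ^ m / n ^ 2) :=
        measure_exists_lt_le_le _ n hpair
    _ = ENNReal.ofReal ((n * (n + 1) : ℝ) * (C / M ^ m / n ^ 2)) := by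
        rw [ENNReal.ofReal_mul (by positivity), ← Nat.cast_succ, ← Nat.cast_mul,
          ENNReal.ofReal_natCast]
    _ < ENNReal.ofReal δ := (ENNReal.ofReal_lt_ofReal_iff hδ).2 <|
        (natCast_mul_succ_mul_div_sq_le n (by positivity)).trans_lt hMδ
end

section
/- PELT pruning lemma: let C be a segment cost function satisfying C(k,T) ≥ C(k,t) + C(t,T) for all k < t < T, and let Q_{t} = min_{0≤l<t} { Q_l + C(l,t) + λ } (with Q_0 = −λ). If Q_k + C(k,t) > Q_t, then for every future time T > t, Q_k + C(k,T) + λ ≥ Q_t + C(t,T) + λ; i.e., k can never be the optimal most-recent change-point at any time after t. -/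
/-- PELT pruning lemma: let `C` be a subadditive segment cost,
`λ > 0`, and `Q` the optimal penalised costs satisfying the Optimal
Partitioning recursion `Q_t = min_{0 ≤ l < t} (Q_l + C(l,t) + λ)` with
`Q_0 = −λ`. If `Q_k + C(k,t) > Q_t` then for every later time `T > t` (with
`T ≤ n`), `Q_k + C(k,T) + λ ≥ Q_t + C(t,T) + λ`: the candidate `k` can be
pruned. -/
theorem pelt_pruning
    (n : ℕ) (C : ℕ → ℕ → ℝ)
    (hsub : ∀ k t T, k < t → t < T → T ≤ n → C k t + C t T ≤ C k T)
    (lam : ℝ) (hlam : 0 < lam)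
    (Q : ℕ → ℝ) (hQ0 : Q 0 = -lam)
    (hQmin : ∀ t, 1 ≤ t → t ≤ n → ∀ l, l < t → Q t ≤ Q l + C l t + lam)
    (hQatt : ∀ t, 1 ≤ t → t ≤ n → ∃ l, l < t ∧ Q t = Q l + C l t + lam)
    (k t : ℕ) (hk : k < t) (ht1 : 1 ≤ t) (htn : t ≤ n)
    (hprune : Q t < Q k + C k t) :
    ∀ T, t < T → T ≤ n → Q t + C t T + lam ≤ Q k + C k T + lam := by
  intro T hT hTn
  have h := hsub k t T hk hT hTn
  linarith
end
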